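/- Let (E, ℰ, ν) be a measure space, γ₁ > 0, γ₂ > 0, let H be a real inner product space, z ∈ H, and let u : E → ℝ be measurable with ∫ h(u(x)/γ₁) dν(x) < ∞. Consider all pairs (v, w) with v ∈ H and w : E → ℝ measurable such that both x ↦ h(w(x)/γ₁) and x ↦ h((u(x)−w(x))/γ₂) are ν-integrable. Then the infimum over all such pairs of ‖v‖²/(2γ₁) + γ₁∫ h(w(x)/γ₁) dν(x) + ‖z−v‖²/(2γ₂) + γ₂∫ h((u(x)−w(x))/γ₂) dν(x) equals ‖z‖²/(2(γ₁+γ₂)) + (γ₁+γ₂)∫ h(u(x)/(γ₁+γ₂)) dν(x), and it is attained at v = (γ₁/(γ₁+γ₂))·z and w = (γ₁/(γ₁+γ₂))·u. -/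

import Mathlib

/-!
Both summands of `g^γ(z,u)` are perspectives `(γ, x) ↦ γ f(x/γ)` of convex functions, namely of
`f = ‖·‖²/2` and of `f = h`. The perspective of a convex function is subadditive in `(γ, x)`, which
gives `g^{γ₁+γ₂}(z,u) ≤ g^{γ₁}(v,w) + g^{γ₂}(z-v,u-w)` for every admissible splitting. It is also
positively homogeneous, so the proportional splitting, which sends both arguments to the same point
`(z/(γ₁+γ₂), u/(γ₁+γ₂))`, attains the bound. Integrability of `h(u/(γ₁+γ₂))` comes from
`h(λt) ≤ λ h(t)` for `λ ∈ [0,1]`.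
-/

open MeasureTheory Set

section Perspective

variable {E : Type*} [AddCommGroup E] [Module ℝ E]

noncomputable def perspective (f : E → ℝ) (a : ℝ) (x : E) : ℝ := a * f (a⁻¹ • x)

theorem ConvexOn.perspective_add_le {f : E → ℝ} (hf : ConvexOn ℝ univ f) {a b : ℝ}
    (ha : 0 < a) (hb : 0 < b) (x y : E) :
    perspective f (a + b) (x + y) ≤ perspective f a x + perspective f b y := by
  have hab : 0 < a + b := add_pos ha hb
  have hmix : (a + b)⁻¹ • (x + y) = (a / (a + b)) • a⁻¹ • x + (b / (a + b)) • b⁻¹ • y := by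
    simp only [smul_smul, smul_add]
    congr 2 <;> field_simp
  have hconv : f ((a + b)⁻¹ • (x + y)) ≤ a / (a + b) * f (a⁻¹ • x) + b / (a + b) * f (b⁻¹ • y) :=
    hmix ▸ hf.2 (mem_univ _) (mem_univ _) (by positivity) (by positivity) (by field_simp)
  calc perspective f (a + b) (x + y)
      ≤ (a + b) * (a / (a + b) * f (a⁻¹ • x) + b / (a + b) * f (b⁻¹ • y)) :=
        mul_le_mul_of_nonneg_left hconv hab.le
    _ = perspective f a x + perspective f b y := by
        simp only [perspective]; field_simp

theorem perspective_div_smul (f : E → ℝ) (a : ℝ) {c : ℝ} (hc : c ≠ 0) (x : E) :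
    perspective f a ((a / c) • x) = a / c * perspective f c x := by
  rcases eq_or_ne a 0 with rfl | ha
  · simp [perspective]
  · simp only [perspective, smul_smul]
    rw [show a⁻¹ * (a / c) = c⁻¹ by field_simp]
    field_simp

theorem perspective_proportional_split (f : E → ℝ) {a b : ℝ} (hab : a + b ≠ 0) (x : E) :
    perspective f a ((a / (a + b)) • x) + perspective f b (x - (a / (a + b)) • x) =
      perspective f (a + b) x := by
  have hrest : x - (a / (a + b)) • x = (b / (a + b)) • x := by
    rw [show b / (a + b) = 1 - a / (a + b) by field_simp; ring, sub_smul, one_smul]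
  rw [hrest, perspective_div_smul f a hab, perspective_div_smul f b hab, ← add_mul,
    ← add_div, div_self hab, one_mul]

theorem perspective_eq_mul_div (f : ℝ → ℝ) (a t : ℝ) : perspective f a t = a * f (t / a) := by
  rw [perspective, smul_eq_mul, inv_mul_eq_div]

end Perspective

section Norm

variable {F : Type*} [SeminormedAddCommGroup F] [NormedSpace ℝ F]

theorem convexOn_half_sq_norm : ConvexOn ℝ univ (fun y : F => ‖y‖ ^ 2 / 2) := by
  simpa [div_eq_inv_mul] using
    (convexOn_univ_norm.pow (fun _ _ => norm_nonneg _) 2).smul (by norm_num : (0 : ℝ) ≤ 2⁻¹)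

theorem perspective_half_sq_norm (a : ℝ) (x : F) :
    perspective (fun y : F => ‖y‖ ^ 2 / 2) a x = ‖x‖ ^ 2 / (2 * a) := by
  rcases eq_or_ne a 0 with rfl | ha
  · simp [perspective]
  · simp only [perspective, norm_smul, norm_inv, Real.norm_eq_abs, mul_pow, inv_pow, sq_abs]
    field_simp

theorem sq_norm_div_le_split {a b : ℝ} (ha : 0 < a) (hb : 0 < b) (z v : F) :
    ‖z‖ ^ 2 / (2 * (a + b)) ≤ ‖v‖ ^ 2 / (2 * a) + ‖z - v‖ ^ 2 / (2 * b) := by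
  simpa only [perspective_half_sq_norm, add_sub_cancel] using
    convexOn_half_sq_norm.perspective_add_le ha hb v (z - v)

theorem sq_norm_div_proportional_split {a b : ℝ} (hab : a + b ≠ 0) (z : F) :
    ‖(a / (a + b)) • z‖ ^ 2 / (2 * a) + ‖z - (a / (a + b)) • z‖ ^ 2 / (2 * b) =
      ‖z‖ ^ 2 / (2 * (a + b)) := by
  have := perspective_proportional_split (fun y : F => ‖y‖ ^ 2 / 2) hab z
  rwa [perspective_half_sq_norm, perspective_half_sq_norm, perspective_half_sq_norm] at this

end Norm

section Entropic

noncomputable def entropicH (t : ℝ) : ℝ := Real.exp t - 1 - t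

theorem entropicH_nonneg (t : ℝ) : 0 ≤ entropicH t := by
  have := Real.add_one_le_exp t
  rw [entropicH]; linarith

theorem continuous_entropicH : Continuous entropicH := by
  unfold entropicH; fun_prop

theorem convexOn_entropicH : ConvexOn ℝ univ entropicH :=
  (convexOn_exp.sub (concaveOn_const 1 convex_univ)).sub (concaveOn_id convex_univ)

theorem entropicH_mul_le {l : ℝ} (hl₀ : 0 ≤ l) (hl₁ : l ≤ 1) (t : ℝ) :
    entropicH (l * t) ≤ l * entropicH t := by
  have := convexOn_entropicH.2 (mem_univ 0) (mem_univ t) (sub_nonneg.2 hl₁) hl₀ (by ring)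
  simpa [entropicH] using this

variable {X : Type*} [MeasurableSpace X] {ν : Measure X}

theorem MeasureTheory.Integrable.entropicH_div_of_le {u : X → ℝ} (hu : Measurable u) {a c : ℝ}
    (ha : 0 < a) (hac : a ≤ c) (hint : Integrable (fun x => entropicH (u x / a)) ν) :
    Integrable (fun x => entropicH (u x / c)) ν := by
  have hc : 0 < c := ha.trans_le hac
  refine (hint.const_mul (a / c)).mono'
    (continuous_entropicH.measurable.comp (hu.div_const c)).aestronglyMeasurable
    (ae_of_all _ fun x => ?_)
  rw [Real.norm_of_nonneg (entropicH_nonneg _), show u x / c = a / c * (u x / a) by field_simp]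
  exact entropicH_mul_le (by positivity) ((div_le_one hc).2 hac) _

theorem integral_entropicH_le_split {a b : ℝ} (ha : 0 < a) (hb : 0 < b) {u w : X → ℝ}
    (hw : Integrable (fun x => entropicH (w x / a)) ν)
    (hw' : Integrable (fun x => entropicH ((u x - w x) / b)) ν) :
    (a + b) * ∫ x, entropicH (u x / (a + b)) ∂ν ≤
      a * ∫ x, entropicH (w x / a) ∂ν + b * ∫ x, entropicH ((u x - w x) / b) ∂ν := by
  have hpt : ∀ x, (a + b) * entropicH (u x / (a + b)) ≤
      a * entropicH (w x / a) + b * entropicH ((u x - w x) / b) := fun x => by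
    simpa only [perspective_eq_mul_div, add_sub_cancel] using
      convexOn_entropicH.perspective_add_le ha hb (w x) (u x - w x)
  rw [← integral_const_mul, ← integral_const_mul, ← integral_const_mul,
    ← integral_add (hw.const_mul a) (hw'.const_mul b)]
  exact integral_mono_of_nonneg
    (ae_of_all _ fun x => mul_nonneg (add_pos ha hb).le (entropicH_nonneg _))
    ((hw.const_mul a).add (hw'.const_mul b)) (ae_of_all _ hpt)

end Entropic

/-- Inf-convolution of two entropic generators `g^γ(z,u) = ‖z‖²/(2γ) + γ∫h(u/γ)dν`
(with `h t = exp t - 1 - t`): the infimum over admissible splittings `(v,w)` of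
`g^{γ₁}(v,w) + g^{γ₂}(z-v, u-w)` equals `g^{γ₁+γ₂}(z,u)`, attained at the proportional
splitting `v = γ₁z/(γ₁+γ₂)`, `w = γ₁u/(γ₁+γ₂)`. -/
theorem entropic_generator_infconv
    {E : Type*} [MeasurableSpace E] (ν : Measure E)
    (γ₁ γ₂ : ℝ) (hγ₁ : 0 < γ₁) (hγ₂ : 0 < γ₂)
    {H : Type*} [NormedAddCommGroup H] [InnerProductSpace ℝ H] (z : H)
    (u : E → ℝ) (hu : Measurable u)
    (hint : Integrable (fun x => Real.exp (u x / γ₁) - 1 - u x / γ₁) ν) :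
    IsLeast
        {r : ℝ | ∃ (v : H) (w : E → ℝ), Measurable w ∧
          Integrable (fun x => Real.exp (w x / γ₁) - 1 - w x / γ₁) ν ∧
          Integrable (fun x => Real.exp ((u x - w x) / γ₂) - 1 - (u x - w x) / γ₂) ν ∧
          r = ‖v‖ ^ 2 / (2 * γ₁)
              + γ₁ * ∫ x, (Real.exp (w x / γ₁) - 1 - w x / γ₁) ∂ν
              + ‖z - v‖ ^ 2 / (2 * γ₂)
              + γ₂ * ∫ x, (Real.exp ((u x - w x) / γ₂) - 1 - (u x - w x) / γ₂) ∂ν}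
        (‖z‖ ^ 2 / (2 * (γ₁ + γ₂))
          + (γ₁ + γ₂) * ∫ x, (Real.exp (u x / (γ₁ + γ₂)) - 1 - u x / (γ₁ + γ₂)) ∂ν) ∧
      (Integrable
          (fun x => Real.exp ((γ₁ / (γ₁ + γ₂)) * u x / γ₁) - 1
            - (γ₁ / (γ₁ + γ₂)) * u x / γ₁) ν ∧
        Integrable
          (fun x => Real.exp ((u x - (γ₁ / (γ₁ + γ₂)) * u x) / γ₂) - 1
            - (u x - (γ₁ / (γ₁ + γ₂)) * u x) / γ₂) ν ∧
        ‖(γ₁ / (γ₁ + γ₂)) • z‖ ^ 2 / (2 * γ₁)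
            + γ₁ * ∫ x, (Real.exp ((γ₁ / (γ₁ + γ₂)) * u x / γ₁) - 1
                - (γ₁ / (γ₁ + γ₂)) * u x / γ₁) ∂ν
            + ‖z - (γ₁ / (γ₁ + γ₂)) • z‖ ^ 2 / (2 * γ₂)
            + γ₂ * ∫ x, (Real.exp ((u x - (γ₁ / (γ₁ + γ₂)) * u x) / γ₂) - 1
                - (u x - (γ₁ / (γ₁ + γ₂)) * u x) / γ₂) ∂ν =
          ‖z‖ ^ 2 / (2 * (γ₁ + γ₂))
            + (γ₁ + γ₂) * ∫ x, (Real.exp (u x / (γ₁ + γ₂)) - 1 - u x / (γ₁ + γ₂)) ∂ν) := by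
  have hγ : 0 < γ₁ + γ₂ := add_pos hγ₁ hγ₂
  simp only [show ∀ t, Real.exp t - 1 - t = entropicH t from fun _ => rfl] at hint ⊢
  have hint' := hint.entropicH_div_of_le hu hγ₁ (le_add_of_nonneg_right hγ₂.le)
  have hfirst : ∀ x, γ₁ / (γ₁ + γ₂) * u x / γ₁ = u x / (γ₁ + γ₂) := fun x => by field_simp
  have hsecond : ∀ x, (u x - γ₁ / (γ₁ + γ₂) * u x) / γ₂ = u x / (γ₁ + γ₂) := fun x => by
    field_simp; ring
  have hattain := sq_norm_div_proportional_split hγ.ne' z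
  simp only [hfirst, hsecond]
  refine ⟨⟨⟨(γ₁ / (γ₁ + γ₂)) • z, fun x => γ₁ / (γ₁ + γ₂) * u x, hu.const_mul _, ?_, ?_, ?_⟩,
    ?_⟩, hint', hint', by linear_combination hattain⟩
  · simpa only [hfirst] using hint'
  · simpa only [hsecond] using hint'
  · simp only [hfirst, hsecond]
    linear_combination -hattain
  · rintro _ ⟨v, w, -, hw, hw', rfl⟩
    linarith [sq_norm_div_le_split hγ₁ hγ₂ z v, integral_entropicH_le_split hγ₁ hγ₂ hw hw']
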